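/- Let S ⊆ ℝ^d be a nonempty compact convex set, f : S → ℝ continuous, and x₀ ∈ S. Then strong duality holds: f⋆(x₀) = sup{ t + v·x₀ : t ∈ ℝ, v ∈ ℝ^d, and t + v·x ≤ f(x) for all x ∈ S }. -/

import Mathlib

/-!
Let `K` be the convex hull of the graph of `f` over `S`; it is compact, because `S` is compact,
`f` is continuous, and by Carathéodory the convex hull of a compact set in finite dimension is a
continuous image of a compact set. A point `(x₀, c) ∈ K` is a convex decomposition of `x₀` with
value `c`, so for `c < f⋆(x₀)` the point `(x₀, c)` lies outside `K` and Hahn–Banach separates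
it strictly from `K`. As `(x₀, f x₀) ∈ K` lies directly above it, the hyperplane is not vertical,
i.e. it is the graph of an affine minorant of `f` on `S` with value `> c` at `x₀`. The reverse
inequality is Jensen's inequality for affine functions.
-/

noncomputable section

/-- The convex-roof value `f⋆(x₀)`: the infimum of `∑ p(λ) f(xλ)` over finite
convex decompositions `∑ p(λ) xλ = x₀` with all `xλ ∈ S`. -/
def fstar {d : ℕ} (S : Set (Fin d → ℝ)) (f : (Fin d → ℝ) → ℝ)
    (x₀ : Fin d → ℝ) : ℝ :=
  sInf {y | ∃ (m : ℕ) (xs : Fin m → Fin d → ℝ) (pr : Fin m → ℝ),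
    (∀ i, 0 ≤ pr i) ∧ (∑ i, pr i) = 1 ∧ (∀ i, xs i ∈ S) ∧
    (∑ i, pr i • xs i) = x₀ ∧ y = ∑ i, pr i * f (xs i)}

open Set

section ConvexHull

variable {E : Type*} [AddCommGroup E] [Module ℝ E]

theorem exists_fin_stdSimplex_of_mem_convexHull [FiniteDimensional ℝ E] {T : Set E} {x : E}
    (hx : x ∈ convexHull ℝ T) :
    ∃ k ≤ Module.finrank ℝ E + 1, ∃ w ∈ stdSimplex ℝ (Fin k), ∃ z : Fin k → E,
      (∀ i, z i ∈ T) ∧ ∑ i, w i • z i = x := by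
  obtain ⟨ι, _, z, w, hzT, hind, hw₀, hw₁, rfl⟩ := eq_pos_convex_span_of_mem_convexHull hx
  have hcard : Fintype.card ι ≤ Module.finrank ℝ E + 1 :=
    hind.card_le_finrank_succ.trans (Nat.add_le_add_right (Submodule.finrank_le _) 1)
  let e := (Fintype.equivFin ι).symm
  refine ⟨_, hcard, w ∘ e, ⟨fun i => (hw₀ _).le, ?_⟩, z ∘ e, fun i => hzT ⟨_, rfl⟩, ?_⟩
  · simpa only [Function.comp_apply, e.sum_comp] using hw₁
  · exact e.sum_comp fun i => w i • z i

theorem IsCompact.convexHull [TopologicalSpace E] [ContinuousAdd E] [ContinuousSMul ℝ E]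
    [FiniteDimensional ℝ E] {T : Set E} (hT : IsCompact T) : IsCompact (_root_.convexHull ℝ T) := by
  let combos (k : ℕ) : Set E := (fun p : (Fin k → ℝ) × (Fin k → E) => ∑ i, p.1 i • p.2 i) ''
    (stdSimplex ℝ (Fin k) ×ˢ univ.pi fun _ => T)
  have hcombos : _root_.convexHull ℝ T = ⋃ k ∈ Iic (Module.finrank ℝ E + 1), combos k := by
    refine (Subset.antisymm (fun x hx => ?_) (iUnion₂_subset fun k _ => ?_))
    · obtain ⟨k, hk, w, hw, z, hz, rfl⟩ := exists_fin_stdSimplex_of_mem_convexHull hx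
      exact mem_biUnion hk ⟨(w, z), ⟨hw, fun i _ => hz i⟩, rfl⟩
    · rintro _ ⟨⟨w, z⟩, ⟨⟨hw₀, hw₁⟩, hz⟩, rfl⟩
      exact mem_convexHull_of_exists_fintype w z hw₀ hw₁ (fun i => hz i (mem_univ i)) rfl
  rw [hcombos]
  refine (finite_Iic _).isCompact_biUnion fun k _ => ?_
  refine ((isCompact_stdSimplex _ _).prod (isCompact_univ_pi fun _ => hT)).image ?_
  fun_prop

end ConvexHull

section Separation

variable {E : Type*} [AddCommGroup E] [Module ℝ E] [TopologicalSpace E] [IsTopologicalAddGroup E]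
  [ContinuousSMul ℝ E] [LocallyConvexSpace ℝ E]

theorem exists_affine_lt_of_notMem_of_mem {K : Set (E × ℝ)} (hconv : Convex ℝ K)
    (hclosed : IsClosed K) {x₀ : E} {c b : ℝ} (hc : (x₀, c) ∉ K) (hb : (x₀, b) ∈ K)
    (hcb : c < b) :
    ∃ (ℓ : StrongDual ℝ E) (t : ℝ), (∀ p ∈ K, t + ℓ p.1 < p.2) ∧ c < t + ℓ x₀ := by
  obtain ⟨φ, u, hφc, hφK⟩ := geometric_hahn_banach_point_closed hconv hclosed hc
  set s := φ (0, 1)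
  set ψ := φ.comp (ContinuousLinearMap.inl ℝ E ℝ)
  have hφ : ∀ p : E × ℝ, φ p = ψ p.1 + p.2 * s := by
    intro p
    have hsplit : p = (p.1, 0) + p.2 • (0, 1) := by ext <;> simp
    rw [hsplit, map_add, map_smul]
    simp [ψ, s]
  have hs : 0 < s := by
    have := hφc.trans (hφK _ hb)
    rw [hφ, hφ] at this
    by_contra! h
    nlinarith
  have haff : ∀ x, u / s + (-(s⁻¹ • ψ)) x = (u - ψ x) / s := fun x => by
    simp only [neg_apply, smul_apply, smul_eq_mul]
    ring
  refine ⟨-(s⁻¹ • ψ), u / s, fun p hp => ?_, ?_⟩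
  · have := hφK p hp
    rw [hφ] at this
    rw [haff, div_lt_iff₀ hs]
    linarith
  · rw [hφ] at hφc
    rw [haff, lt_div_iff₀ hs]
    linarith

end Separation

open Matrix

theorem StrongDual.apply_eq_dotProduct {ι : Type*} [Fintype ι] [DecidableEq ι]
    (ℓ : StrongDual ℝ (ι → ℝ)) (x : ι → ℝ) : ℓ x = (fun i => ℓ (Pi.single i 1)) ⬝ᵥ x := by
  conv_lhs => rw [pi_eq_sum_univ' x]
  simp [dotProduct, mul_comm]

section ConvexRoof

variable {d : ℕ} (S : Set (Fin d → ℝ)) (f : (Fin d → ℝ) → ℝ) (x₀ : Fin d → ℝ)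

def decompositionValues : Set ℝ :=
  {y | ∃ (m : ℕ) (xs : Fin m → Fin d → ℝ) (pr : Fin m → ℝ),
    (∀ i, 0 ≤ pr i) ∧ (∑ i, pr i) = 1 ∧ (∀ i, xs i ∈ S) ∧
    (∑ i, pr i • xs i) = x₀ ∧ y = ∑ i, pr i * f (xs i)}

def affineMinorantValues : Set ℝ :=
  {y | ∃ (t : ℝ) (v : Fin d → ℝ), (∀ x ∈ S, t + v ⬝ᵥ x ≤ f x) ∧ y = t + v ⬝ᵥ x₀}

variable {S f x₀}

theorem apply_mem_decompositionValues (hx₀ : x₀ ∈ S) : f x₀ ∈ decompositionValues S f x₀ :=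
  ⟨1, fun _ => x₀, fun _ => 1, fun _ => zero_le_one, by simp, fun _ => hx₀, by simp, by simp⟩

theorem mem_decompositionValues_of_mem_convexHull {c : ℝ}
    (h : (x₀, c) ∈ convexHull ℝ ((fun x => (x, f x)) '' S)) : c ∈ decompositionValues S f x₀ := by
  obtain ⟨k, -, w, ⟨hw₀, hw₁⟩, z, hz, hsum⟩ := exists_fin_stdSimplex_of_mem_convexHull h
  choose xs hxs hz using hz
  obtain rfl : z = fun i => (xs i, f (xs i)) := funext fun i => (hz i).symm
  refine ⟨k, xs, w, hw₀, hw₁, hxs, ?_, ?_⟩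
  · simpa [Prod.fst_sum] using congrArg Prod.fst hsum
  · simpa [Prod.snd_sum] using (congrArg Prod.snd hsum).symm

theorem affineMinorantValues_subset_lowerBounds :
    affineMinorantValues S f x₀ ⊆ lowerBounds (decompositionValues S f x₀) := by
  rintro _ ⟨t, v, hv, rfl⟩ _ ⟨m, xs, pr, hpr₀, hpr₁, hxs, rfl, rfl⟩
  calc t + v ⬝ᵥ ∑ i, pr i • xs i = ∑ i, pr i * (t + v ⬝ᵥ xs i) := by
        simp [dotProduct_sum, dotProduct_smul, mul_add, Finset.sum_add_distrib, ← Finset.sum_mul,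
          hpr₁]
    _ ≤ ∑ i, pr i * f (xs i) :=
        Finset.sum_le_sum fun i _ => mul_le_mul_of_nonneg_left (hv _ (hxs i)) (hpr₀ i)

theorem affineMinorantValues_nonempty (hS : IsCompact S) (hf : ContinuousOn f S)
    (hne : S.Nonempty) : (affineMinorantValues S f x₀).Nonempty :=
  let ⟨xm, _, hmin⟩ := hS.exists_isMinOn hne hf
  ⟨f xm, f xm, 0, fun x hx => by simpa using hmin hx, by simp⟩

theorem exists_mem_affineMinorantValues_gt (hS : IsCompact S) (hf : ContinuousOn f S)
    (hx₀ : x₀ ∈ S) {c : ℝ} (hc : c < sInf (decompositionValues S f x₀)) :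
    ∃ y ∈ affineMinorantValues S f x₀, c < y := by
  obtain ⟨m, hm⟩ := affineMinorantValues_nonempty (x₀ := x₀) hS hf ⟨x₀, hx₀⟩
  have hbdd : BddBelow (decompositionValues S f x₀) :=
    ⟨m, affineMinorantValues_subset_lowerBounds hm⟩
  set K := convexHull ℝ ((fun x => (x, f x)) '' S)
  have hK : IsCompact K := (hS.image_of_continuousOn (continuousOn_id.prodMk hf)).convexHull
  have hcK : (x₀, c) ∉ K := fun h =>
    hc.not_ge (csInf_le hbdd (mem_decompositionValues_of_mem_convexHull h))
  -- `(x₀, f x₀) ∈ K` lies above `(x₀, c)`, so the separating hyperplane is not vertical.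
  have hcf : c < f x₀ := hc.trans_le (csInf_le hbdd (apply_mem_decompositionValues hx₀))
  obtain ⟨ℓ, t, hℓK, hℓx₀⟩ := exists_affine_lt_of_notMem_of_mem (convex_convexHull ℝ _)
    hK.isClosed hcK (subset_convexHull ℝ _ ⟨x₀, hx₀, rfl⟩) hcf
  refine ⟨t + ℓ x₀, ⟨t, fun i => ℓ (Pi.single i 1), fun x hx => ?_, ?_⟩, hℓx₀⟩
  · rw [← ℓ.apply_eq_dotProduct]
    exact (hℓK _ (subset_convexHull ℝ _ ⟨x, hx, rfl⟩)).le
  · rw [ℓ.apply_eq_dotProduct]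

end ConvexRoof

theorem fstar_strong_duality_general {d : ℕ} (S : Set (Fin d → ℝ))
    (f : (Fin d → ℝ) → ℝ) (hScomp : IsCompact S)
    (hf : ContinuousOn f S)
    (x₀ : Fin d → ℝ) (hx₀ : x₀ ∈ S) :
    fstar S f x₀ =
      sSup {y | ∃ (t : ℝ) (v : Fin d → ℝ),
        (∀ x ∈ S, t + (∑ i, v i * x i) ≤ f x) ∧ y = t + ∑ i, v i * x₀ i} := by
  change sInf (decompositionValues S f x₀) = sSup (affineMinorantValues S f x₀)
  have hne : (decompositionValues S f x₀).Nonempty := ⟨_, apply_mem_decompositionValues hx₀⟩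
  have hweak : ∀ y ∈ affineMinorantValues S f x₀, y ≤ sInf (decompositionValues S f x₀) :=
    fun y hy => le_csInf hne (affineMinorantValues_subset_lowerBounds hy)
  refine le_antisymm (le_of_forall_lt fun c hc => ?_)
    (csSup_le (affineMinorantValues_nonempty hScomp hf ⟨x₀, hx₀⟩) hweak)
  obtain ⟨y, hy, hcy⟩ := exists_mem_affineMinorantValues_gt hScomp hf hx₀ hc
  exact lt_csSup_of_lt ⟨_, hweak⟩ hy hcy

/-- Proposition 8 (strong duality): `f⋆(x₀)` equals the supremum of affine
lower bounds on `f` over `S`, evaluated at `x₀`. -/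
theorem fstar_strong_duality {d : ℕ} (S : Set (Fin d → ℝ))
    (f : (Fin d → ℝ) → ℝ) (hS : S.Nonempty) (hScomp : IsCompact S)
    (hSconv : Convex ℝ S) (hf : ContinuousOn f S)
    (x₀ : Fin d → ℝ) (hx₀ : x₀ ∈ S) :
    fstar S f x₀ =
      sSup {y | ∃ (t : ℝ) (v : Fin d → ℝ),
        (∀ x ∈ S, t + (∑ i, v i * x i) ≤ f x) ∧ y = t + ∑ i, v i * x₀ i} :=
  fstar_strong_duality_general S f hScomp hf x₀ hx₀

end
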